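/- There exists a nonzero constant C such that for all i, j ∈ {1,2,3}, the integral over ℝ³ of ∂ᵢW · ∂ⱼW equals δᵢⱼ · C. -/

import Mathlib

open MeasureTheory

/-- The ground state soliton `W(x) = √3 (1 + 3|x|²)^(-1/2)` on `ℝ³`. -/
noncomputable def W (x : Fin 3 → ℝ) : ℝ :=
  Real.sqrt 3 * (1 + 3 * ∑ i, x i ^ 2) ^ (-(1 : ℝ) / 2)

/-- The `i`-th partial derivative of a function on `ℝ³`. -/
noncomputable def pderiv3 (i : Fin 3) (f : (Fin 3 → ℝ) → ℝ) (x : Fin 3 → ℝ) : ℝ :=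
  fderiv ℝ f x (Pi.single i 1)

/-- The Euclidean Laplacian on `ℝ³`, `Δf = ∑ᵢ ∂ᵢ∂ᵢ f`. -/
noncomputable def laplacian3 (f : (Fin 3 → ℝ) → ℝ) (x : Fin 3 → ℝ) : ℝ :=
  ∑ i, pderiv3 i (pderiv3 i f) x

/-- `ΛW = (1/2)W + x·∇W`, the scaling derivative of the soliton. -/
noncomputable def LamW (x : Fin 3 → ℝ) : ℝ :=
  (1 / 2) * W x + ∑ i, x i * pderiv3 i W x

/-! The products `∂ᵢW ∂ⱼW = 27 xᵢ xⱼ (1 + 3|x|²)⁻³` have the form `xᵢ xⱼ g(|x|²)`. Reflecting `xᵢ ↦ -xᵢ`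
preserves Lebesgue measure and flips the sign of such an integrand when `i ≠ j`, so the off-diagonal
integrals vanish; swapping two coordinates shows that the diagonal integrals all agree. Their common
value is the integral of a continuous nonnegative function, not identically zero and integrable
because it is `O(|x|⁻⁴)` in dimension `3`, hence positive. -/

section Radial

variable {ι : Type*} [Fintype ι]

theorem hasFDerivAt_sum_sq (x : ι → ℝ) :
    HasFDerivAt (fun y : ι → ℝ => ∑ k, y k ^ 2)
      (∑ k, (2 * x k) • ContinuousLinearMap.proj (R := ℝ) (φ := fun _ : ι => ℝ) k) x :=
  HasFDerivAt.fun_sum fun k _ => by simpa using (hasFDerivAt_apply (𝕜 := ℝ) k x).pow 2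

theorem fderiv_comp_sum_sq_apply_single [DecidableEq ι] {g : ℝ → ℝ} {g' : ℝ} {x : ι → ℝ}
    (hg : HasDerivAt g g' (∑ k, x k ^ 2)) (i : ι) :
    fderiv ℝ (fun y => g (∑ k, y k ^ 2)) x (Pi.single i 1) = 2 * x i * g' := by
  have h : HasFDerivAt (fun y => g (∑ k, y k ^ 2)) _ x :=
    hg.comp_hasFDerivAt x (hasFDerivAt_sum_sq x)
  rw [h.fderiv]
  simp [Pi.single_apply]
  ring

theorem norm_sq_le_sum_sq (x : ι → ℝ) : ‖x‖ ^ 2 ≤ ∑ k, x k ^ 2 := by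
  have hx : ‖x‖ ≤ √(∑ k, x k ^ 2) := (pi_norm_le_iff_of_nonneg (Real.sqrt_nonneg _)).2 fun k =>
    Real.abs_le_sqrt (Finset.single_le_sum (fun k _ => sq_nonneg (x k)) (Finset.mem_univ k))
  calc ‖x‖ ^ 2 ≤ √(∑ k, x k ^ 2) ^ 2 := by gcongr
    _ = ∑ k, x k ^ 2 := Real.sq_sqrt (by positivity)

theorem integrable_inv_one_add_sum_sq_pow {n : ℕ} (hn : Fintype.card ι < 2 * n) :
    Integrable fun x : ι → ℝ => ((1 + ∑ k, x k ^ 2) ^ n)⁻¹ := by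
  have hr : (Module.finrank ℝ (ι → ℝ) : ℝ) < 2 * n := by
    simpa using (by exact_mod_cast hn : (Fintype.card ι : ℝ) < 2 * n)
  have hcont : Continuous fun x : ι → ℝ => ((1 + ∑ k, x k ^ 2) ^ n)⁻¹ :=
    Continuous.inv₀ (by fun_prop) fun x => by positivity
  refine (integrable_rpow_neg_one_add_norm_sq hr).mono' hcont.aestronglyMeasurable
    (.of_forall fun x => ?_)
  rw [Real.norm_of_nonneg (by positivity), show -(2 * n : ℝ) / 2 = -(n : ℕ) by ring,
    Real.rpow_neg (by positivity), Real.rpow_natCast]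
  gcongr
  exact norm_sq_le_sum_sq x

end Radial

section Symmetry

variable {ι : Type*} [DecidableEq ι]

noncomputable def reflectCoord (i : ι) : (ι → ℝ) ≃ᵐ (ι → ℝ) :=
  MeasurableEquiv.ofInvolutive (fun x => Function.update x i (-x i))
    (fun x => by simp) (by fun_prop)

theorem reflectCoord_apply (i : ι) (x : ι → ℝ) :
    reflectCoord i x = Function.update x i (-x i) := rfl

variable [Fintype ι]

theorem measurePreserving_reflectCoord (i : ι) : MeasurePreserving (reflectCoord i) := by
  have h := volume_preserving_pi (f := fun k => if k = i then (Neg.neg : ℝ → ℝ) else id)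
    fun k => by
      split_ifs
      exacts [Measure.measurePreserving_neg volume, MeasurePreserving.id volume]
  convert h using 1
  ext x k
  by_cases hk : k = i <;> simp [reflectCoord_apply, hk]

theorem sum_sq_reflectCoord (i : ι) (x : ι → ℝ) :
    ∑ k, reflectCoord i x k ^ 2 = ∑ k, x k ^ 2 :=
  Finset.sum_congr rfl fun k _ => by
    rw [reflectCoord_apply, Function.update_apply]
    split_ifs with hk <;> simp [hk]

theorem integral_coord_mul_coord_mul_radial_of_ne (g : ℝ → ℝ) {i j : ι} (hij : i ≠ j) :
    ∫ x : ι → ℝ, x i * x j * g (∑ k, x k ^ 2) = 0 := by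
  have hodd : ∀ x : ι → ℝ, reflectCoord i x i * reflectCoord i x j *
      g (∑ k, reflectCoord i x k ^ 2) = -(x i * x j * g (∑ k, x k ^ 2)) := fun x => by
    rw [sum_sq_reflectCoord, reflectCoord_apply, Function.update_self,
      Function.update_of_ne hij.symm]
    ring
  have h := (measurePreserving_reflectCoord i).integral_comp'
    fun x : ι → ℝ => x i * x j * g (∑ k, x k ^ 2)
  simp only [hodd, integral_neg] at h
  linarith

theorem integral_coord_sq_mul_radial_eq (g : ℝ → ℝ) (i j : ι) :
    ∫ x : ι → ℝ, x i * x i * g (∑ k, x k ^ 2) = ∫ x : ι → ℝ, x j * x j * g (∑ k, x k ^ 2) := by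
  have h := (volume_measurePreserving_piCongrLeft (fun _ : ι => ℝ) (Equiv.swap i j)).integral_comp'
      fun x : ι → ℝ => x j * x j * g (∑ k, x k ^ 2)
  set e := MeasurableEquiv.piCongrLeft (fun _ : ι => ℝ) (Equiv.swap i j)
  have he : ∀ x k, e x (Equiv.swap i j k) = x k := fun x k =>
    Equiv.piCongrLeft_apply_apply (fun _ : ι => ℝ) (Equiv.swap i j) x k
  have hsum : ∀ x, ∑ k, e x k ^ 2 = ∑ k, x k ^ 2 := fun x => by
    rw [← Equiv.sum_comp (Equiv.swap i j)]; simp only [he]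
  have hj : ∀ x, e x j = x i := fun x => by simpa using he x i
  rw [← h]
  congr 1 with x
  rw [hsum, hj]

theorem integral_coord_mul_coord_mul_radial (g : ℝ → ℝ) (i₀ i j : ι) :
    ∫ x : ι → ℝ, x i * x j * g (∑ k, x k ^ 2) =
      if i = j then ∫ x : ι → ℝ, x i₀ * x i₀ * g (∑ k, x k ^ 2) else 0 := by
  split_ifs with hij
  · rw [hij, integral_coord_sq_mul_radial_eq g j i₀]
  · exact integral_coord_mul_coord_mul_radial_of_ne g hij

theorem integral_coord_sq_mul_radial_pos {g : ℝ → ℝ} (hg : ContinuousOn g (Set.Ici 0))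
    (hpos : ∀ s, 0 ≤ s → 0 < g s) (i : ι)
    (hint : Integrable fun x : ι → ℝ => x i * x i * g (∑ k, x k ^ 2)) :
    0 < ∫ x : ι → ℝ, x i * x i * g (∑ k, x k ^ 2) := by
  have hcont : Continuous fun x : ι → ℝ => x i * x i * g (∑ k, x k ^ 2) :=
    (continuous_apply i).mul (continuous_apply i) |>.mul <|
      hg.comp_continuous (by fun_prop) fun x => Set.mem_Ici.2 (by positivity)
  refine integral_pos_of_integrable_nonneg_nonzero (x := Pi.single i 1) hcont hint
    (fun x => mul_nonneg (mul_self_nonneg _) (hpos _ (by positivity)).le) ?_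
  simpa using (hpos _ (by positivity)).ne'

end Symmetry

theorem hasDerivAt_sqrt_three_mul_one_add_three_mul_rpow {s : ℝ} (hs : 0 ≤ s) :
    HasDerivAt (fun s => √3 * (1 + 3 * s) ^ (-(1 : ℝ) / 2))
      (-(3 * √3 / 2) * (1 + 3 * s) ^ (-(3 : ℝ) / 2)) s := by
  have h := (((hasDerivAt_id' s).const_mul 3).const_add 1).rpow_const (p := -(1 : ℝ) / 2)
    (Or.inl (by positivity))
  refine (h.const_mul √3).congr_deriv ?_
  norm_num
  ring

theorem pderiv3_W (i : Fin 3) (x : Fin 3 → ℝ) :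
    pderiv3 i W x = -(3 * √3) * x i * (1 + 3 * ∑ k, x k ^ 2) ^ (-(3 : ℝ) / 2) := by
  have h := fderiv_comp_sum_sq_apply_single (g := fun s => √3 * (1 + 3 * s) ^ (-(1 : ℝ) / 2))
    (hasDerivAt_sqrt_three_mul_one_add_three_mul_rpow (by positivity : 0 ≤ ∑ k, x k ^ 2)) i
  exact h.trans (by ring)

theorem pderivW_mul_pderivW (i j : Fin 3) (x : Fin 3 → ℝ) :
    pderiv3 i W x * pderiv3 j W x = x i * x j * (27 / (1 + 3 * ∑ k, x k ^ 2) ^ 3) := by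
  have ht : 0 < 1 + 3 * ∑ k, x k ^ 2 := by positivity
  have hpow : (1 + 3 * ∑ k, x k ^ 2) ^ (-(3 : ℝ) / 2) * (1 + 3 * ∑ k, x k ^ 2) ^ (-(3 : ℝ) / 2) =
      ((1 + 3 * ∑ k, x k ^ 2) ^ 3)⁻¹ := by
    rw [← Real.rpow_add ht, show -(3 : ℝ) / 2 + -(3 : ℝ) / 2 = -((3 : ℕ) : ℝ) by norm_num,
      Real.rpow_neg ht.le, Real.rpow_natCast]
  have hsqrt : √3 * √3 = 3 := Real.mul_self_sqrt (by norm_num)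
  calc pderiv3 i W x * pderiv3 j W x
      = 9 * (√3 * √3) * x i * x j * ((1 + 3 * ∑ k, x k ^ 2) ^ (-(3 : ℝ) / 2) *
          (1 + 3 * ∑ k, x k ^ 2) ^ (-(3 : ℝ) / 2)) := by rw [pderiv3_W, pderiv3_W]; ring
    _ = x i * x j * (27 / (1 + 3 * ∑ k, x k ^ 2) ^ 3) := by rw [hpow, hsqrt]; ring

theorem integrable_coord_sq_mul_div_one_add_three_mul_sum_sq_pow_three {ι : Type*} [Fintype ι]
    (hι : Fintype.card ι < 4) (i : ι) :
    Integrable fun x : ι → ℝ => x i * x i * (27 / (1 + 3 * ∑ k, x k ^ 2) ^ 3) := by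
  refine ((integrable_inv_one_add_sum_sq_pow (n := 2) hι).const_mul 27).mono'
    (by fun_prop) (.of_forall fun x => ?_)
  have hs : 0 ≤ ∑ k, x k ^ 2 := by positivity
  have hxi : x i * x i ≤ 1 + ∑ k, x k ^ 2 := by
    nlinarith [Finset.single_le_sum (fun k _ => sq_nonneg (x k)) (Finset.mem_univ i)]
  rw [Real.norm_of_nonneg (mul_nonneg (mul_self_nonneg _) (by positivity))]
  calc x i * x i * (27 / (1 + 3 * ∑ k, x k ^ 2) ^ 3)
      ≤ (1 + ∑ k, x k ^ 2) * (27 / (1 + ∑ k, x k ^ 2) ^ 3) := by gcongr; linarith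
    _ = 27 * ((1 + ∑ k, x k ^ 2) ^ 2)⁻¹ := by field_simp

/-- `∫ ∂ᵢW ∂ⱼW = δᵢⱼ C` for some nonzero constant `C`. -/
theorem integral_pderivW_mul_pderivW :
    ∃ C : ℝ, C ≠ 0 ∧ ∀ i j : Fin 3,
      ∫ x : Fin 3 → ℝ, pderiv3 i W x * pderiv3 j W x =
        if i = j then C else 0 := by
  set g : ℝ → ℝ := fun s => 27 / (1 + 3 * s) ^ 3
  have hg : ContinuousOn g (Set.Ici 0) :=
    continuousOn_const.div (by fun_prop) fun s (hs : 0 ≤ s) => by positivity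
  have hpos : ∀ s, 0 ≤ s → 0 < g s := fun s hs => by positivity
  have hprod : ∀ i j, (fun x => pderiv3 i W x * pderiv3 j W x) =
      fun x => x i * x j * g (∑ k, x k ^ 2) := fun i j => funext (pderivW_mul_pderivW i j)
  refine ⟨_, (integral_coord_sq_mul_radial_pos hg hpos (0 : Fin 3)
    (integrable_coord_sq_mul_div_one_add_three_mul_sum_sq_pow_three (by simp) 0)).ne',
    fun i j => ?_⟩
  rw [hprod]
  exact integral_coord_mul_coord_mul_radial g 0 i j
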